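/- arXiv:2211.02312 — 3 statements merged into one kernel-verified Lean document; each statement's English description precedes it below -/
import Mathlib

section
/- Let d > 2 and let X_n ⊂ ℝ^d be the 2^{d−1}-point design consisting of all points (±1/2, …, ±1/2) having an even number of negative coordinates (the half-fraction of the vertices of the cube [−1/2, 1/2]^d of maximum resolution). Then the covering radius of the cube X = [−1,1]^d for this design equals √(d+8)/2; that is, max_{x ∈ [−1,1]^d} min_{y ∈ X_n} ‖x − y‖ = √(d+8)/2. -/
/-!
A point `y` of `{±1/2}^d` lies in the design iff `∏ yᵢ > 0`. Rounding each coordinate of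
`x ∈ [-1,1]^d` to `±1/2` costs at most `1/4` per squared coordinate; if the rounded vertex has
negative product, flipping one coordinate repairs the sign at a cost of at most `9/4`, so
`dist(x, design)² ≤ (d - 1)/4 + 9/4 = (d + 8)/4`. Conversely, let `x ∈ {±1}^d` with `∏ xᵢ < 0`.
For `y` in the design every coordinate contributes at least `1/4`, and `∏ xᵢ yᵢ < 0` forces some
`xⱼ yⱼ < 0`, where the contribution is `9/4`; so the bound is attained.
-/

open Set

open Classical in
/-- The `2^{d-1}` design of maximum resolution: the points of `{-1/2, 1/2}^d` whose
coordinates contain an even number of entries equal to `-1/2`. -/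
noncomputable def maxResDesign (d : ℕ) : Set (EuclideanSpace ℝ (Fin d)) :=
  {y | (∀ i, y i = 1/2 ∨ y i = -(1/2)) ∧
    Even (Finset.univ.filter (fun i : Fin d => y i = -(1/2))).card}

/-- The cube `[-1,1]^d` in `ℝ^d`. -/
def bigCube (d : ℕ) : Set (EuclideanSpace ℝ (Fin d)) :=
  {x | ∀ i, x i ∈ Set.Icc (-1 : ℝ) 1}

open Finset Metric

lemma sqrt_div_four (r : ℝ) : √(r / 4) = √r / 2 := by
  rw [Real.sqrt_div' _ (by norm_num), show (4 : ℝ) = 2 ^ 2 by norm_num, Real.sqrt_sq zero_le_two]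

lemma even_iff_neg_one_pow_pos (n : ℕ) : Even n ↔ 0 < (-1 : ℝ) ^ n := by
  rcases Nat.even_or_odd n with h | h
  · simp [h, h.neg_one_pow]
  · simp [h.neg_one_pow, Nat.not_even_iff_odd.2 h]

section Fintype

variable {ι R : Type*} [Fintype ι]

lemma prod_update_neg [CommRing R] [DecidableEq ι] (y : ι → R) (i : ι) :
    ∏ j, Function.update y i (-y i) j = -∏ j, y j := by
  rw [prod_update_of_mem (Finset.mem_univ i),
    prod_eq_mul_prod_sdiff_singleton_of_mem (Finset.mem_univ i), neg_mul]

lemma sum_ite_eq_add_mul [Ring R] [DecidableEq ι] (i : ι) (a b : R) :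
    ∑ j, (if j = i then a else b) = a + (Fintype.card ι - 1) * b := by
  rw [sum_ite, filter_eq', filter_ne', if_pos (Finset.mem_univ i), sum_singleton, sum_const,
    card_erase_of_mem (Finset.mem_univ i), card_univ, nsmul_eq_mul,
    Nat.cast_pred (Fintype.card_pos_iff.2 ⟨i⟩)]

lemma prod_eq_neg_one_pow_mul (y : ι → ℝ) (hy : ∀ i, y i = 1/2 ∨ y i = -(1/2))
    [DecidablePred fun i => y i = -(1/2)] :
    ∏ i, y i = (-1) ^ #{i | y i = -(1/2)} * (1/2) ^ Fintype.card ι := by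
  have h : ∀ i, y i = (if y i = -(1/2) then -1 else 1) * (1/2) := by
    intro i; split_ifs <;> grind
  rw [prod_congr rfl fun i _ => h i, prod_mul_distrib, prod_ite, prod_const, prod_const_one,
    mul_one, prod_const, card_univ]

end Fintype

lemma mem_maxResDesign_iff {d : ℕ} {y : EuclideanSpace ℝ (Fin d)} :
    y ∈ maxResDesign d ↔ (∀ i, y i = 1/2 ∨ y i = -(1/2)) ∧ 0 < ∏ i, y i := by
  classical
  refine and_congr_right fun hy => ?_
  rw [prod_eq_neg_one_pow_mul _ hy, mul_pos_iff_of_pos_right (by positivity)]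
  exact even_iff_neg_one_pow_pos _

lemma maxResDesign_nonempty (d : ℕ) : (maxResDesign d).Nonempty :=
  ⟨WithLp.toLp 2 fun _ => 1/2,
    mem_maxResDesign_iff.2 ⟨fun _ => Or.inl rfl, prod_pos fun _ _ => by norm_num⟩⟩

lemma exists_mem_maxResDesign_forall_ne_eq {d : ℕ} (s : EuclideanSpace ℝ (Fin d))
    (hs : ∀ i, s i = 1/2 ∨ s i = -(1/2)) (i : Fin d) :
    ∃ y ∈ maxResDesign d, ∀ j ≠ i, y j = s j := by
  by_cases hpos : 0 < ∏ j, s j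
  · exact ⟨s, mem_maxResDesign_iff.2 ⟨hs, hpos⟩, fun _ _ => rfl⟩
  have hne : ∏ j, s j ≠ 0 :=
    prod_ne_zero_iff.2 fun j _ => by rcases hs j with h | h <;> norm_num [h]
  refine ⟨WithLp.toLp 2 (Function.update s i (-s i)), mem_maxResDesign_iff.2 ⟨fun j => ?_, ?_⟩,
    fun j hj => Function.update_of_ne hj _ _⟩
  · rcases eq_or_ne j i with rfl | hj
    · simp only [Function.update_self]
      rcases hs j with h | h <;> norm_num [h]
    · simpa only [PiLp.toLp_apply, Function.update_of_ne hj] using hs j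
  · rw [prod_update_neg]
    exact neg_pos.2 (lt_of_le_of_ne (not_lt.1 hpos) hne)

noncomputable def halfSign (a : ℝ) : ℝ := if 0 ≤ a then 1/2 else -(1/2)

lemma halfSign_eq_or (a : ℝ) : halfSign a = 1/2 ∨ halfSign a = -(1/2) := by
  unfold halfSign; split_ifs <;> simp

lemma sq_sub_halfSign_le {a : ℝ} (ha : a ∈ Set.Icc (-1) 1) : (a - halfSign a) ^ 2 ≤ 1/4 := by
  obtain ⟨h₁, h₂⟩ := ha
  unfold halfSign; split_ifs <;> nlinarith

lemma sq_sub_le_nine_fourths {a b : ℝ} (ha : a ∈ Set.Icc (-1) 1) (hb : b = 1/2 ∨ b = -(1/2)) :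
    (a - b) ^ 2 ≤ 9/4 := by
  obtain ⟨h₁, h₂⟩ := ha
  rcases hb with rfl | rfl <;> nlinarith

lemma one_fourth_le_sq_sub {a b : ℝ} (ha : a = 1 ∨ a = -1) (hb : b = 1/2 ∨ b = -(1/2)) :
    1/4 ≤ (a - b) ^ 2 := by
  rcases ha with rfl | rfl <;> rcases hb with rfl | rfl <;> norm_num

lemma nine_fourths_le_sq_sub {a b : ℝ} (ha : a = 1 ∨ a = -1) (hb : b = 1/2 ∨ b = -(1/2))
    (hab : a * b < 0) : 9/4 ≤ (a - b) ^ 2 := by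
  rcases ha with rfl | rfl <;> rcases hb with rfl | rfl <;> linarith

lemma infDist_maxResDesign_le {d : ℕ} (hd : 0 < d) {x : EuclideanSpace ℝ (Fin d)}
    (hx : x ∈ bigCube d) : infDist x (maxResDesign d) ≤ √(d + 8) / 2 := by
  let i₀ : Fin d := ⟨0, hd⟩
  obtain ⟨y, hy, hyx⟩ := exists_mem_maxResDesign_forall_ne_eq
    (WithLp.toLp 2 fun i => halfSign (x i)) (fun i => halfSign_eq_or (x i)) i₀
  refine (infDist_le_dist_of_mem hy).trans ?_
  rw [← Real.sqrt_sq dist_nonneg, ← sqrt_div_four]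
  gcongr
  rw [EuclideanSpace.dist_sq_eq]
  calc ∑ i, dist (x i) (y i) ^ 2 ≤ ∑ i, if i = i₀ then 9/4 else 1/4 := by
        refine sum_le_sum fun i _ => ?_
        rw [Real.dist_eq, sq_abs]
        split_ifs with h
        · exact sq_sub_le_nine_fourths (hx i) ((mem_maxResDesign_iff.1 hy).1 i)
        · rw [hyx i h]; exact sq_sub_halfSign_le (hx i)
    _ = (d + 8) / 4 := by rw [sum_ite_eq_add_mul, Fintype.card_fin]; ring

lemma le_infDist_maxResDesign {d : ℕ} {x : EuclideanSpace ℝ (Fin d)}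
    (hx : ∀ i, x i = 1 ∨ x i = -1) (hneg : ∏ i, x i < 0) :
    √(d + 8) / 2 ≤ infDist x (maxResDesign d) := by
  refine (le_infDist (maxResDesign_nonempty d)).2 fun y hy => ?_
  obtain ⟨hy, hpos⟩ := mem_maxResDesign_iff.1 hy
  obtain ⟨j, hj⟩ : ∃ j, x j * y j < 0 := by
    by_contra! h
    have : 0 ≤ ∏ i, x i * y i := prod_nonneg fun j _ => h j
    rw [prod_mul_distrib] at this
    nlinarith
  rw [← sqrt_div_four, ← Real.sqrt_sq dist_nonneg]
  gcongr
  rw [EuclideanSpace.dist_sq_eq]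
  calc ((d : ℝ) + 8) / 4 = ∑ i, if i = j then 9/4 else 1/4 := by
        rw [sum_ite_eq_add_mul, Fintype.card_fin]; ring
    _ ≤ ∑ i, dist (x i) (y i) ^ 2 := by
        refine sum_le_sum fun i _ => ?_
        rw [Real.dist_eq, sq_abs]
        split_ifs with h
        · exact nine_fourths_le_sq_sub (hx i) (hy i) (h ▸ hj)
        · exact one_fourth_le_sq_sub (hx i) (hy i)

/-- For `d > 2`, the covering radius of the cube `[-1,1]^d` for the `2^{d-1}` design of
maximum resolution concentrated at the points `(±1/2, …, ±1/2)` equals `√(d+8)/2`. -/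
theorem coverRadius_maxResDesign (d : ℕ) (hd : 2 < d) :
    (⨆ p : bigCube d, Metric.infDist (p : EuclideanSpace ℝ (Fin d)) (maxResDesign d))
      = Real.sqrt ((d : ℝ) + 8) / 2 := by
  have hd₀ : 0 < d := by omega
  let i₀ : Fin d := ⟨0, hd₀⟩
  let x₀ : EuclideanSpace ℝ (Fin d) := WithLp.toLp 2 fun i => if i = i₀ then -1 else 1
  have hx₀ : ∀ i, x₀ i = 1 ∨ x₀ i = -1 := fun i => by dsimp only [x₀]; split_ifs <;> simp
  have hx₀_mem : x₀ ∈ bigCube d := fun i => by rcases hx₀ i with h | h <;> norm_num [h]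
  have hx₀_neg : ∏ i, x₀ i < 0 := by simp [x₀, prod_ite_eq']
  have hle (p : bigCube d) : infDist (p : EuclideanSpace ℝ (Fin d)) (maxResDesign d) ≤
      √(d + 8) / 2 := infDist_maxResDesign_le hd₀ p.2
  have : Nonempty (bigCube d) := ⟨⟨x₀, hx₀_mem⟩⟩
  refine le_antisymm (ciSup_le hle) ?_
  exact (le_infDist_maxResDesign hx₀ hx₀_neg).trans
    (le_ciSup ⟨_, Set.forall_mem_range.2 hle⟩ (⟨x₀, hx₀_mem⟩ : bigCube d))
end

section
/- Let X ⊂ ℝ^d be a nonempty compact set, X_n = {x_1, …, x_n} a finite design, and L > 0. Then the worst-case error of the design for global minimization over the class of L-Lipschitz functions equals L times the covering radius: sup over all L-Lipschitz functions f : X → ℝ of ( min_{1 ≤ j ≤ n} f(x_j) − inf_{x ∈ X} f(x) ) = L · CR(X_n), where CR(X_n) = max_{x ∈ X} min_j ‖x − x_j‖. -/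
open Set

/-- The covering radius of a set `X ⊆ ℝ^d` for the design with points `x 0, …, x (n-1)`:
`CR(X_n) = max_{p ∈ X} min_j ‖p - x_j‖`. -/
noncomputable def coverRadius {d n : ℕ} (X : Set (EuclideanSpace ℝ (Fin d)))
    (x : Fin n → EuclideanSpace ℝ (Fin d)) : ℝ :=
  ⨆ p : X, Metric.infDist (p : EuclideanSpace ℝ (Fin d)) (Set.range x)

/-- The worst-case error of a design `X_n ⊆ X` for global minimization over the class of
`L`-Lipschitz functions on a nonempty compact `X ⊂ ℝ^d` equals `L · CR(X_n)`:
`sup_{f L-Lipschitz on X} ( min_j f(x_j) - inf_{x ∈ X} f(x) ) = L · CR(X_n)`. -/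
theorem lipschitz_worst_case_error_eq {d n : ℕ} (hn : 1 ≤ n)
    (X : Set (EuclideanSpace ℝ (Fin d))) (hXne : X.Nonempty) (hXc : IsCompact X)
    (x : Fin n → EuclideanSpace ℝ (Fin d)) (hx : ∀ j, x j ∈ X)
    (L : ℝ) (hL : 0 < L) :
    sSup {e : ℝ | ∃ f : EuclideanSpace ℝ (Fin d) → ℝ,
        LipschitzOnWith (Real.toNNReal L) f X ∧
        e = (⨅ j : Fin n, f (x j)) - ⨅ p : X, f (p : EuclideanSpace ℝ (Fin d))}
      = L * coverRadius X x := by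
  classical
  have hnL : (Real.toNNReal L : ℝ) = L := Real.coe_toNNReal L hL.le
  set D := Set.range x with hDdef
  have hFinNe : Nonempty (Fin n) := ⟨⟨0, hn⟩⟩
  have hDne : D.Nonempty := Set.range_nonempty x
  have hXne' : Nonempty X := hXne.to_subtype
  set g : EuclideanSpace ℝ (Fin d) → ℝ := fun p => Metric.infDist p D with hgdef
  have hgc : Continuous g := Metric.continuous_infDist_pt D
  -- the covering radius is attained
  obtain ⟨p₀, hp₀X, hp₀max⟩ := hXc.exists_isMaxOn hXne hgc.continuousOn
  have hbdd : BddAbove (Set.range fun p : X => g (p : EuclideanSpace ℝ (Fin d))) := by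
    refine ⟨g p₀, ?_⟩
    rintro _ ⟨p, rfl⟩
    exact hp₀max p.2
  have hCR : coverRadius X x = g p₀ := by
    refine le_antisymm (ciSup_le fun p => hp₀max p.2) ?_
    exact le_ciSup hbdd (⟨p₀, hp₀X⟩ : X)
  have hgle : ∀ p ∈ X, g p ≤ coverRadius X x := by
    intro p hp
    rw [hCR]; exact hp₀max hp
  have hCRnn : 0 ≤ coverRadius X x := by
    rw [hCR]; exact Metric.infDist_nonneg
  -- upper bound for every element of the set
  have hub : ∀ e ∈ {e : ℝ | ∃ f : EuclideanSpace ℝ (Fin d) → ℝ,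
      LipschitzOnWith (Real.toNNReal L) f X ∧
      e = (⨅ j : Fin n, f (x j)) - ⨅ p : X, f (p : EuclideanSpace ℝ (Fin d))},
      e ≤ L * coverRadius X x := by
    rintro e ⟨f, hf, rfl⟩
    obtain ⟨q, hqX, hqmin⟩ := hXc.exists_isMinOn hXne (hf.continuousOn)
    obtain ⟨j, hj⟩ := Finite.exists_min fun i => dist q (x i)
    have h1 : (⨅ j : Fin n, f (x j)) ≤ f (x j) := by
      refine ciInf_le ⟨f q, ?_⟩ j
      rintro _ ⟨i, rfl⟩
      exact hqmin (hx i)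
    have h2 : f q ≤ ⨅ p : X, f (p : EuclideanSpace ℝ (Fin d)) :=
      le_ciInf fun p => hqmin p.2
    have h3 : dist q (x j) ≤ g q := by
      rw [hgdef]
      simp only
      rw [Metric.infDist_eq_iInf]
      refine le_ciInf fun y => ?_
      obtain ⟨i, hi⟩ := y.2
      calc dist q (x j) ≤ dist q (x i) := hj i
        _ = dist q (y : EuclideanSpace ℝ (Fin d)) := by rw [hi]
    have h4 : f (x j) - f q ≤ L * dist q (x j) := by
      have := hf.dist_le_mul (x j) (hx j) q hqX
      rw [hnL] at this
      calc f (x j) - f q ≤ |f (x j) - f q| := le_abs_self _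
        _ = dist (f (x j)) (f q) := (Real.dist_eq _ _).symm
        _ ≤ L * dist (x j) q := this
        _ = L * dist q (x j) := by rw [dist_comm]
    calc (⨅ j : Fin n, f (x j)) - (⨅ p : X, f (p : EuclideanSpace ℝ (Fin d)))
        ≤ f (x j) - f q := sub_le_sub h1 h2
      _ ≤ L * dist q (x j) := h4
      _ ≤ L * coverRadius X x := by
          apply mul_le_mul_of_nonneg_left _ hL.le
          exact h3.trans (hgle q hqX)
  -- the bound is attained by f = -(L * infDist · D)
  have hmem : L * coverRadius X x ∈ {e : ℝ | ∃ f : EuclideanSpace ℝ (Fin d) → ℝ,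
      LipschitzOnWith (Real.toNNReal L) f X ∧
      e = (⨅ j : Fin n, f (x j)) - ⨅ p : X, f (p : EuclideanSpace ℝ (Fin d))} := by
    refine ⟨fun p => -(L * g p), ?_, ?_⟩
    · refine LipschitzOnWith.of_dist_le_mul fun a _ b _ => ?_
      have hg1 : dist (g a) (g b) ≤ dist a b := by
        simpa using (Metric.lipschitz_infDist_pt D).dist_le_mul a b
      rw [Real.dist_eq] at hg1
      rw [hnL, Real.dist_eq]
      have : |-(L * g a) - -(L * g b)| = L * |g a - g b| := by
        have h : -(L * g a) - -(L * g b) = L * (g b - g a) := by ring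
        rw [h, abs_mul, abs_of_pos hL, abs_sub_comm]
      rw [this]
      exact mul_le_mul_of_nonneg_left hg1 hL.le
    · have hzero : ∀ j : Fin n, -(L * g (x j)) = 0 := by
        intro j
        have : g (x j) = 0 := Metric.infDist_zero_of_mem (Set.mem_range_self j)
        rw [this]; ring
      have hInfj : (⨅ j : Fin n, -(L * g (x j))) = 0 := by
        simp only [hzero]
        exact ciInf_const
      have hInfX : (⨅ p : X, -(L * g (p : EuclideanSpace ℝ (Fin d)))) =
          -(L * coverRadius X x) := by
        refine le_antisymm ?_ ?_
        · have : -(L * g p₀) = -(L * coverRadius X x) := by rw [hCR]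
          calc (⨅ p : X, -(L * g (p : EuclideanSpace ℝ (Fin d))))
              ≤ -(L * g p₀) := by
                refine ciInf_le ⟨-(L * coverRadius X x), ?_⟩ (⟨p₀, hp₀X⟩ : X)
                rintro _ ⟨p, rfl⟩
                exact neg_le_neg (mul_le_mul_of_nonneg_left (hgle p p.2) hL.le)
            _ = -(L * coverRadius X x) := this
        · refine le_ciInf fun p => ?_
          exact neg_le_neg (mul_le_mul_of_nonneg_left (hgle p p.2) hL.le)
      rw [hInfj, hInfX]
      ring
  refine le_antisymm (csSup_le ⟨L * coverRadius X x, hmem⟩ hub) ?_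
  exact le_csSup ⟨L * coverRadius X x, hub⟩ hmem
end

section
/- Let d > 2 and let X_n ⊂ ℝ^d be the 2^{d−1}-point design of maximum resolution at the points (±1/2, …, ±1/2) (even number of negative coordinates). Then every vertex v of the cube [−1,1]^d whose coordinates contain an odd number of entries equal to −1 satisfies min_{y ∈ X_n} ‖v − y‖ = √(d+8)/2; that is, the covering radius √(d+8)/2 of [−1,1]^d for this design is attained at these vertices. -/
/-!
For `v ∈ {±1}^d` and `y ∈ {±1/2}^d`, `‖v - y‖² = d/4 + 2k`, where `k` is the number of coordinates
in which `v` and `y` have opposite signs. The sets of negative coordinates of `v` and of a design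
point `y` have cardinalities of opposite parity, so their symmetric difference is odd and `k ≥ 1`;
halving `v` and flipping one sign gives a design point with `k = 1`.
-/

open Set

open scoped Finset symmDiff

theorem Finset.even_card_symmDiff_iff {α : Type*} [DecidableEq α] (s t : Finset α) :
    Even #(s ∆ t) ↔ (Even #s ↔ Even #t) := by
  have h₁ : #(s ∆ t) + #(s ∩ t) = #(s ∪ t) := by
    rw [symmDiff_eq_sup_sdiff_inf]
    exact card_sdiff_add_card_eq_card inter_subset_union
  have h₂ := card_union_add_card_inter s t
  rw [← Nat.even_add, show #s + #t = #(s ∆ t) + 2 * #(s ∩ t) by omega]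
  simp [Nat.even_add]

section SignVectors

variable {ι : Type*}

section Flip

variable [DecidableEq ι]

noncomputable def halveFlip (v : EuclideanSpace ℝ ι) (i₀ : ι) : EuclideanSpace ℝ ι :=
  WithLp.toLp 2 fun i => if i = i₀ then -v i / 2 else v i / 2

theorem halveFlip_apply_eq_or {v : EuclideanSpace ℝ ι} (hv : ∀ i, v i = 1 ∨ v i = -1) (i₀ i : ι) :
    halveFlip v i₀ i = 1/2 ∨ halveFlip v i₀ i = -(1/2) := by
  simp only [halveFlip]
  split_ifs <;> rcases hv i with h | h <;> norm_num [h]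

end Flip

variable [Fintype ι]

noncomputable def coordFiber (x : EuclideanSpace ℝ ι) (c : ℝ) : Finset ι := {i | x i = c}

variable [DecidableEq ι]

theorem dist_sq_eq_of_signs {v y : EuclideanSpace ℝ ι} (hv : ∀ i, v i = 1 ∨ v i = -1)
    (hy : ∀ i, y i = 1/2 ∨ y i = -(1/2)) :
    dist v y ^ 2 = Fintype.card ι / 4
      + 2 * #(coordFiber v (-1) ∆ coordFiber y (-(1/2))) := by
  have hcoord : ∀ i, dist (v i) (y i) ^ 2 = 1/4
      + if i ∈ coordFiber v (-1) ∆ coordFiber y (-(1/2)) then 2 else 0 := by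
    intro i
    simp only [Real.dist_eq, sq_abs, Finset.mem_symmDiff, coordFiber, Finset.mem_filter,
      Finset.mem_univ, true_and]
    rcases hv i with h | h <;> rcases hy i with h' | h' <;> rw [h, h'] <;> norm_num
  rw [EuclideanSpace.dist_sq_eq, Fintype.sum_congr _ _ hcoord, Finset.sum_add_distrib,
    Finset.sum_ite_mem]
  simp only [Finset.univ_inter, Finset.sum_const, Finset.card_univ, nsmul_eq_mul]
  ring

theorem coordFiber_halveFlip {v : EuclideanSpace ℝ ι} (hv : ∀ i, v i = 1 ∨ v i = -1) (i₀ : ι) :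
    coordFiber (halveFlip v i₀) (-(1/2)) = coordFiber v (-1) ∆ {i₀} := by
  ext i
  simp only [coordFiber, halveFlip, Finset.mem_symmDiff, Finset.mem_filter, Finset.mem_univ,
    Finset.mem_singleton, true_and]
  rcases eq_or_ne i i₀ with rfl | h <;> rcases hv i with h' | h' <;> norm_num [*]

theorem dist_sq_halveFlip {v : EuclideanSpace ℝ ι} (hv : ∀ i, v i = 1 ∨ v i = -1) (i₀ : ι) :
    dist v (halveFlip v i₀) ^ 2 = (Fintype.card ι + 8) / 4 := by
  rw [dist_sq_eq_of_signs hv (halveFlip_apply_eq_or hv i₀), coordFiber_halveFlip hv,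
    symmDiff_symmDiff_cancel_left, Finset.card_singleton]
  ring

end SignVectors

section MaxResDesign

variable {d : ℕ} {v : EuclideanSpace ℝ (Fin d)}

theorem halveFlip_mem_maxResDesign (hv : ∀ i, v i = 1 ∨ v i = -1) (hodd : Odd #(coordFiber v (-1)))
    (i₀ : Fin d) : halveFlip v i₀ ∈ maxResDesign d := by
  refine ⟨halveFlip_apply_eq_or hv i₀, ?_⟩
  change Even #(coordFiber (halveFlip v i₀) (-(1/2)))
  rw [coordFiber_halveFlip hv, Finset.even_card_symmDiff_iff]
  simpa using hodd

theorem add_eight_div_four_le_dist_sq (hv : ∀ i, v i = 1 ∨ v i = -1)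
    (hodd : Odd #(coordFiber v (-1))) {y : EuclideanSpace ℝ (Fin d)} (hy : y ∈ maxResDesign d) :
    ((d : ℝ) + 8) / 4 ≤ dist v y ^ 2 := by
  obtain ⟨hy, heven⟩ := hy
  have hodd' : ¬Even #(coordFiber v (-1) ∆ coordFiber y (-(1/2))) := by
    rw [Finset.even_card_symmDiff_iff]
    exact fun h => Nat.not_even_iff_odd.2 hodd (h.2 heven)
  have : (1 : ℝ) ≤ #(coordFiber v (-1) ∆ coordFiber y (-(1/2))) := by
    exact_mod_cast (Nat.not_even_iff_odd.1 hodd').pos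
  rw [dist_sq_eq_of_signs hv hy, Fintype.card_fin]
  linarith

end MaxResDesign

open Classical in
theorem infDist_odd_vertex_maxResDesign_general (d : ℕ)
    (v : EuclideanSpace ℝ (Fin d))
    (hv : ∀ i, v i = 1 ∨ v i = -1)
    (hodd : Odd (Finset.univ.filter (fun i : Fin d => v i = -1)).card) :
    Metric.infDist v (maxResDesign d) = Real.sqrt ((d : ℝ) + 8) / 2 := by
  obtain ⟨i₀, -⟩ := Finset.card_pos.1 hodd.pos
  have hmem := halveFlip_mem_maxResDesign hv hodd i₀
  have hdist := dist_sq_halveFlip hv i₀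
  rw [Fintype.card_fin] at hdist
  rw [show √((d : ℝ) + 8) / 2 = √(((d : ℝ) + 8) / 4) by
    rw [Real.sqrt_div' _ (by norm_num : (0 : ℝ) ≤ 4)]; norm_num]
  apply le_antisymm
  · calc _ ≤ dist v (halveFlip v i₀) := Metric.infDist_le_dist_of_mem hmem
      _ = _ := ((Real.sqrt_eq_iff_eq_sq (by positivity) dist_nonneg).2 hdist.symm).symm
  · exact (Metric.le_infDist ⟨_, hmem⟩).2 fun y hy =>
      (Real.sqrt_le_left dist_nonneg).2 (add_eight_div_four_le_dist_sq hv hodd hy)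

open Classical in
/-- For `d > 2`, every vertex `v` of the cube `[-1,1]^d` with an odd number of
coordinates equal to `-1` is at distance exactly `√(d+8)/2` from the `2^{d-1}` design of
maximum resolution; i.e. the covering radius `√(d+8)/2` of `[-1,1]^d` is attained at
these vertices. -/
theorem infDist_odd_vertex_maxResDesign (d : ℕ) (hd : 2 < d)
    (v : EuclideanSpace ℝ (Fin d))
    (hv : ∀ i, v i = 1 ∨ v i = -1)
    (hodd : Odd (Finset.univ.filter (fun i : Fin d => v i = -1)).card) :
    Metric.infDist v (maxResDesign d) = Real.sqrt ((d : ℝ) + 8) / 2 :=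
  infDist_odd_vertex_maxResDesign_general d v hv hodd
end
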